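/- arXiv:2009.08717 — 12 statements merged into one kernel-verified Lean document; each statement's English description precedes it below -/
import Mathlib

section
/- If w : ℝ → ℝ is twice differentiable and satisfies w'' + β w' + α w = 0, and ρ = sqrt(β² - 4α) with β² - 4α > 0, then the function I(ζ) = (2 w'(ζ) + (β + ρ) w(ζ))^(ρ+β) · (2 w'(ζ) + (β - ρ) w(ζ))^(ρ-β) is constant on any interval where both expressions 2w' + (β+ρ)w and 2w' + (β-ρ)w are positive. -/
/-!
Factor the operator through its characteristic roots `l, m` (so `l + m = -β`, `l m = α`):
then `w' - l w` solves the first-order equation `y' = m y`, so `u = 2w' + (β + ρ) w` and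
`v = 2w' + (β - ρ) w` satisfy `u' = (ρ - β)/2 · u` and `v' = -(ρ + β)/2 · v`. Hence the logarithmic derivative of
`u ^ (ρ + β) * v ^ (ρ - β)` is `(ρ + β)(ρ - β)/2 - (ρ - β)(ρ + β)/2 = 0`.
-/

open Real

theorem hasDerivAt_deriv_sub_mul_of_roots {w : ℝ → ℝ} {α β l m x : ℝ}
    (hw : DifferentiableAt ℝ w x) (hw' : DifferentiableAt ℝ (deriv w) x)
    (heq : deriv (deriv w) x + β * deriv w x + α * w x = 0)
    (hsum : l + m = -β) (hprod : l * m = α) :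
    HasDerivAt (fun y => deriv w y - l * w y) (m * (deriv w x - l * w x)) x := by
  refine (hw'.hasDerivAt.sub (hw.hasDerivAt.const_mul l)).congr_deriv ?_
  linear_combination heq - deriv w x * hsum + w x * hprod

theorem hasDerivAt_two_mul_deriv_add_mul {w : ℝ → ℝ} {α β s x : ℝ}
    (hw : DifferentiableAt ℝ w x) (hw' : DifferentiableAt ℝ (deriv w) x)
    (heq : deriv (deriv w) x + β * deriv w x + α * w x = 0) (hs : s ^ 2 = β ^ 2 - 4 * α) :
    HasDerivAt (fun y => 2 * deriv w y + (β + s) * w y)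
      ((s - β) / 2 * (2 * deriv w x + (β + s) * w x)) x := by
  have hroots := hasDerivAt_deriv_sub_mul_of_roots (l := -(β + s) / 2) (m := (s - β) / 2)
    hw hw' heq (by ring) (by linear_combination -hs / 4)
  refine ((hroots.const_mul 2).congr_deriv (by ring)).congr_of_eventuallyEq
    (.of_forall fun y => ?_)
  ring

theorem HasDerivAt.rpow_const_of_hasDerivAt_mul_self {u : ℝ → ℝ} {c p x : ℝ}
    (hu : HasDerivAt u (c * u x) x) (hux : u x ≠ 0) :
    HasDerivAt (fun y => u y ^ p) (p * c * u x ^ p) x := by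
  refine (hu.rpow_const (Or.inl hux)).congr_deriv ?_
  rw [rpow_sub_one hux]
  field_simp

theorem HasDerivAt.rpow_mul_rpow_of_hasDerivAt_mul_self {u v : ℝ → ℝ} {c d p q x : ℝ}
    (hu : HasDerivAt u (c * u x) x) (hv : HasDerivAt v (d * v x) x)
    (hux : u x ≠ 0) (hvx : v x ≠ 0) :
    HasDerivAt (fun y => u y ^ p * v y ^ q) ((p * c + q * d) * (u x ^ p * v x ^ q)) x := by
  refine ((hu.rpow_const_of_hasDerivAt_mul_self hux).mul
    (hv.rpow_const_of_hasDerivAt_mul_self hvx)).congr_deriv ?_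
  ring

theorem stmt_0 (α β : ℝ) (hdisc : β ^ 2 - 4 * α > 0)
    (ρ : ℝ) (hρ : ρ = Real.sqrt (β ^ 2 - 4 * α))
    (w : ℝ → ℝ) (hw : Differentiable ℝ w) (hw' : Differentiable ℝ (deriv w))
    (heq : ∀ ζ : ℝ, deriv (deriv w) ζ + β * deriv w ζ + α * w ζ = 0)
    (a b : ℝ)
    (hpos : ∀ ζ ∈ Set.Ioo a b,
      0 < 2 * deriv w ζ + (β + ρ) * w ζ ∧ 0 < 2 * deriv w ζ + (β - ρ) * w ζ) :
    ∀ x ∈ Set.Ioo a b, ∀ x' ∈ Set.Ioo a b,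
      (2 * deriv w x + (β + ρ) * w x) ^ (ρ + β) *
        (2 * deriv w x + (β - ρ) * w x) ^ (ρ - β)
      = (2 * deriv w x' + (β + ρ) * w x') ^ (ρ + β) *
        (2 * deriv w x' + (β - ρ) * w x') ^ (ρ - β) := by
  have hρsq : ρ ^ 2 = β ^ 2 - 4 * α := hρ ▸ sq_sqrt hdisc.le
  have hu (ζ : ℝ) := hasDerivAt_two_mul_deriv_add_mul (hw ζ) (hw' ζ) (heq ζ) hρsq
  have hv (ζ : ℝ) : HasDerivAt (fun y => 2 * deriv w y + (β - ρ) * w y)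
      ((-ρ - β) / 2 * (2 * deriv w ζ + (β - ρ) * w ζ)) ζ := by
    simpa only [← sub_eq_add_neg] using
      hasDerivAt_two_mul_deriv_add_mul (hw ζ) (hw' ζ) (heq ζ) (s := -ρ) (by rw [neg_sq, hρsq])
  have hI : ∀ ζ ∈ Set.Ioo a b, HasDerivAt (fun y => (2 * deriv w y + (β + ρ) * w y) ^ (ρ + β) *
      (2 * deriv w y + (β - ρ) * w y) ^ (ρ - β)) 0 ζ := fun ζ hζ => by
    refine ((hu ζ).rpow_mul_rpow_of_hasDerivAt_mul_self (hv ζ)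
      (hpos ζ hζ).1.ne' (hpos ζ hζ).2.ne').congr_deriv ?_
    ring
  intro x hx x' hx'
  exact isOpen_Ioo.is_const_of_deriv_eq_zero isPreconnected_Ioo
    (fun ζ hζ => (hI ζ hζ).differentiableAt.differentiableWithinAt)
    (fun ζ hζ => (hI ζ hζ).deriv) hx hx'
end

section
/- If w : ℝ → ℝ is twice differentiable and satisfies w'' + β w' + (β²/4) w = 0 (the critically damped case α = β²/4, i.e. ρ = 0), then I(ζ) = (2 w'(ζ) + β w(ζ)) · exp( β w(ζ) / (2 w'(ζ) + β w(ζ)) ) is constant on any interval where 2 w' + β w ≠ 0. -/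
theorem stmt_1 (β : ℝ)
    (w : ℝ → ℝ) (hw : Differentiable ℝ w) (hw' : Differentiable ℝ (deriv w))
    (heq : ∀ ζ : ℝ, deriv (deriv w) ζ + β * deriv w ζ + (β ^ 2 / 4) * w ζ = 0)
    (a b : ℝ)
    (hne : ∀ ζ ∈ Set.Ioo a b, 2 * deriv w ζ + β * w ζ ≠ 0) :
    ∀ x ∈ Set.Ioo a b, ∀ x' ∈ Set.Ioo a b,
      (2 * deriv w x + β * w x) * Real.exp (β * w x / (2 * deriv w x + β * w x))
      = (2 * deriv w x' + β * w x') * Real.exp (β * w x' / (2 * deriv w x' + β * w x')) := by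
  set u : ℝ → ℝ := fun ζ => 2 * deriv w ζ + β * w ζ with hu_def
  set f : ℝ → ℝ := fun ζ => u ζ * Real.exp (β * w ζ / u ζ) with hf_def
  have key : ∀ x ∈ Set.Ioo a b, HasDerivAt f 0 x := by
    intro x hx
    have hux : u x ≠ 0 := hne x hx
    have hw2 : deriv (deriv w) x = -(β * deriv w x) - β ^ 2 / 4 * w x := by
      have := heq x; linarith
    have hu : HasDerivAt u (2 * deriv (deriv w) x + β * deriv w x) x :=
      ((hw' x).hasDerivAt.const_mul 2).add ((hw x).hasDerivAt.const_mul β)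
    have hq : HasDerivAt (fun ζ => β * w ζ / u ζ)
        ((β * deriv w x * u x - β * w x * (2 * deriv (deriv w) x + β * deriv w x)) / u x ^ 2)
        x := ((hw x).hasDerivAt.const_mul β).div hu hux
    have hq' : (β * deriv w x * u x - β * w x * (2 * deriv (deriv w) x + β * deriv w x)) / u x ^ 2
        = β / 2 := by
      rw [hw2]
      field_simp [hu_def]
      ring
    rw [hq'] at hq
    have hF : HasDerivAt f
        ((2 * deriv (deriv w) x + β * deriv w x) * Real.exp (β * w x / u x)
          + u x * (Real.exp (β * w x / u x) * (β / 2))) x := hu.mul hq.exp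
    have hz : (2 * deriv (deriv w) x + β * deriv w x) * Real.exp (β * w x / u x)
          + u x * (Real.exp (β * w x / u x) * (β / 2)) = 0 := by
      rw [hw2]; simp only [hu_def]; ring
    rwa [hz] at hF
  intro x hx x' hx'
  have := (convex_Ioo a b).is_const_of_fderivWithin_eq_zero
    (f := f) (fun y hy => ((key y hy).differentiableAt).differentiableWithinAt)
    (fun y hy => by
      rw [fderivWithin_of_isOpen isOpen_Ioo hy, (key y hy).hasFDerivAt.fderiv]
      ext; simp) hx hx'
  exact this
end

section
/- If w : ℝ → ℝ is twice differentiable and satisfies w'' + β w' + α w = 0, where β² - 4α < 0, then I(ζ) = log(α w² + β w w' + (w')²) - (2β / sqrt(4α - β²)) · arctan( (2w' + β w) / (sqrt(4α - β²) · w) ) is constant on any interval where w > 0 and α w² + β w w' + (w')² > 0. -/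
/-!
With `Q = α w² + β w w' + w'²` and `u = (2w' + βw) / (s w)`, `s = √(4α - β²)`, the equation
`w'' = -βw' - αw` gives `Q' = -β Q`, `u' = -2Q / (s w²)` and `1 + u² = 4Q / (s w)²`. Hence
`(log Q)' = -β` and `(arctan u)' = -s/2`, so `log Q - (2β/s) arctan u` has derivative zero.
Positivity of `Q` where `w ≠ 0` is automatic, since `4Q = (2w' + βw)² + s² w²`.
-/

open Real Set

noncomputable section

namespace DampedOscillator

variable (α β : ℝ)

def quadForm (W V : ℝ) : ℝ := α * W ^ 2 + β * W * V + V ^ 2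

/-- Along a phase curve `t ↦ (w t, v t)`; for a solution `w` one takes `v = w'`. -/
def firstIntegral (w v : ℝ → ℝ) (t : ℝ) : ℝ :=
  log (quadForm α β (w t) (v t))
    - (2 * β / √(4 * α - β ^ 2)) * arctan ((2 * v t + β * w t) / (√(4 * α - β ^ 2) * w t))

variable {α β}

theorem quadForm_pos (hdisc : β ^ 2 - 4 * α < 0) {W : ℝ} (hW : W ≠ 0) (V : ℝ) :
    0 < quadForm α β W V := by
  unfold quadForm
  have hs : 0 < 4 * α - β ^ 2 := by linarith
  nlinarith [sq_nonneg (2 * V + β * W), mul_pos (sq_pos_of_ne_zero hW) hs]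

theorem one_add_sq_phase {s : ℝ} (hs : s ^ 2 = 4 * α - β ^ 2) (hs0 : s ≠ 0) {W : ℝ} (hW : W ≠ 0)
    (V : ℝ) : 1 + ((2 * V + β * W) / (s * W)) ^ 2 = 4 * quadForm α β W V / (s * W) ^ 2 := by
  unfold quadForm
  field_simp
  linear_combination W ^ 2 * hs

section Derivatives

variable {w v : ℝ → ℝ} {t : ℝ}
  (hw : HasDerivAt w (v t) t) (hv : HasDerivAt v (-(β * v t + α * w t)) t)
include hw hv

theorem hasDerivAt_quadForm :
    HasDerivAt (fun t ↦ quadForm α β (w t) (v t)) (-β * quadForm α β (w t) (v t)) t := by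
  unfold quadForm
  refine ((((hw.fun_pow 2).const_mul α).fun_add ((hw.const_mul β).fun_mul hv)).fun_add
    (hv.fun_pow 2)).congr_deriv ?_
  push_cast
  ring

theorem hasDerivAt_log_quadForm (hQ : quadForm α β (w t) (v t) ≠ 0) :
    HasDerivAt (fun t ↦ log (quadForm α β (w t) (v t))) (-β) t := by
  refine ((hasDerivAt_quadForm hw hv).log hQ).congr_deriv ?_
  field_simp

theorem hasDerivAt_arctan_phase {s : ℝ} (hs : s ^ 2 = 4 * α - β ^ 2) (hs0 : s ≠ 0)
    (hwt : w t ≠ 0) :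
    HasDerivAt (fun t ↦ arctan ((2 * v t + β * w t) / (s * w t))) (-s / 2) t := by
  have hQ : quadForm α β (w t) (v t) ≠ 0 :=
    (quadForm_pos (by nlinarith [sq_pos_of_ne_zero hs0]) hwt _).ne'
  have hu : HasDerivAt (fun t ↦ (2 * v t + β * w t) / (s * w t))
      (-(2 * s * quadForm α β (w t) (v t)) / (s * w t) ^ 2) t := by
    refine (((hv.const_mul 2).fun_add (hw.const_mul β)).fun_div (hw.const_mul s)
      (mul_ne_zero hs0 hwt)).congr_deriv ?_
    unfold quadForm
    ring
  refine hu.arctan.congr_deriv ?_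
  rw [one_add_sq_phase hs hs0 hwt]
  field_simp
  ring

theorem hasDerivAt_firstIntegral (hdisc : β ^ 2 - 4 * α < 0) (hwt : w t ≠ 0) :
    HasDerivAt (firstIntegral α β w v) 0 t := by
  set s := √(4 * α - β ^ 2)
  have hs : s ^ 2 = 4 * α - β ^ 2 := sq_sqrt (by linarith)
  have hs0 : s ≠ 0 := (sqrt_pos.mpr (by linarith)).ne'
  refine ((hasDerivAt_log_quadForm hw hv (quadForm_pos hdisc hwt _).ne').fun_sub
    ((hasDerivAt_arctan_phase hw hv hs hs0 hwt).const_mul (2 * β / s))).congr_deriv ?_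
  field_simp
  ring

end Derivatives

end DampedOscillator

end

open DampedOscillator in
theorem stmt_2_general (α β : ℝ) (hdisc : β ^ 2 - 4 * α < 0)
    (w : ℝ → ℝ) (hw : Differentiable ℝ w) (hw' : Differentiable ℝ (deriv w))
    (heq : ∀ ζ : ℝ, deriv (deriv w) ζ + β * deriv w ζ + α * w ζ = 0)
    (a b : ℝ)
    (hwpos : ∀ ζ ∈ Set.Ioo a b, 0 < w ζ) :
    ∀ x ∈ Set.Ioo a b, ∀ x' ∈ Set.Ioo a b,
      Real.log (α * w x ^ 2 + β * w x * deriv w x + deriv w x ^ 2)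
        - (2 * β / Real.sqrt (4 * α - β ^ 2)) *
            Real.arctan ((2 * deriv w x + β * w x) / (Real.sqrt (4 * α - β ^ 2) * w x))
      = Real.log (α * w x' ^ 2 + β * w x' * deriv w x' + deriv w x' ^ 2)
        - (2 * β / Real.sqrt (4 * α - β ^ 2)) *
            Real.arctan ((2 * deriv w x' + β * w x') / (Real.sqrt (4 * α - β ^ 2) * w x')) := by
  have hw'' : ∀ ζ, HasDerivAt (deriv w) (-(β * deriv w ζ + α * w ζ)) ζ := fun ζ ↦
    (hw' ζ).hasDerivAt.congr_deriv (by linarith [heq ζ])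
  have hderiv : ∀ ζ ∈ Ioo a b, HasDerivAt (firstIntegral α β w (deriv w)) 0 ζ := fun ζ hζ ↦
    hasDerivAt_firstIntegral (hw ζ).hasDerivAt (hw'' ζ) hdisc (hwpos ζ hζ).ne'
  intro x hx x' hx'
  exact isOpen_Ioo.is_const_of_deriv_eq_zero isPreconnected_Ioo
    (fun ζ hζ ↦ (hderiv ζ hζ).differentiableAt.differentiableWithinAt)
    (fun ζ hζ ↦ (hderiv ζ hζ).deriv) hx hx'

theorem stmt_2 (α β : ℝ) (hdisc : β ^ 2 - 4 * α < 0)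
    (w : ℝ → ℝ) (hw : Differentiable ℝ w) (hw' : Differentiable ℝ (deriv w))
    (heq : ∀ ζ : ℝ, deriv (deriv w) ζ + β * deriv w ζ + α * w ζ = 0)
    (a b : ℝ)
    (hwpos : ∀ ζ ∈ Set.Ioo a b, 0 < w ζ)
    (hqpos : ∀ ζ ∈ Set.Ioo a b,
      0 < α * w ζ ^ 2 + β * w ζ * deriv w ζ + deriv w ζ ^ 2) :
    ∀ x ∈ Set.Ioo a b, ∀ x' ∈ Set.Ioo a b,
      Real.log (α * w x ^ 2 + β * w x * deriv w x + deriv w x ^ 2)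
        - (2 * β / Real.sqrt (4 * α - β ^ 2)) *
            Real.arctan ((2 * deriv w x + β * w x) / (Real.sqrt (4 * α - β ^ 2) * w x))
      = Real.log (α * w x' ^ 2 + β * w x' * deriv w x' + deriv w x' ^ 2)
        - (2 * β / Real.sqrt (4 * α - β ^ 2)) *
            Real.arctan ((2 * deriv w x' + β * w x') / (Real.sqrt (4 * α - β ^ 2) * w x')) :=
  stmt_2_general α β hdisc w hw hw' heq a b hwpos
end

section
/- Let F, G : ℝ × ℝ → ℝ be smooth with F_y · G ≠ 0, and suppose y : ℝ → ℝ is twice differentiable. Define the nonlocal (generalized Sundman) change of variables w = F(z, y(z)), dζ = G(z, y(z)) dz, i.e. ζ(z) satisfies ζ'(z) = G(z, y(z)). If w (as a function of ζ) satisfies w_ζζ + β w_ζ + α w = 0 and the constraint G F_yy - F_y G_y = 0 holds along the solution, then y satisfies y'' + g(z,y) y' + h(z,y) = 0 with g = (2 G F_yz - F_y G_z - F_z G_y + β G² F_y)/(G F_y) and h = (G F_zz - F_z G_z + β G² F_z + α G³ F)/(G F_y). -/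
/-- Partial derivative in the second (y) variable of a curried function. -/
noncomputable def pdy (F : ℝ → ℝ → ℝ) : ℝ → ℝ → ℝ := fun z t => deriv (F z) t

/-- Partial derivative in the first (z) variable of a curried function. -/
noncomputable def pdz (F : ℝ → ℝ → ℝ) : ℝ → ℝ → ℝ := fun z t => deriv (fun u => F u t) z

open Function

lemma hasDerivAt_fst (H : ℝ → ℝ → ℝ) (hH : ContDiff ℝ (⊤ : ℕ∞) (uncurry H)) (z t : ℝ) :
    HasDerivAt (fun u => H u t) (fderiv ℝ (uncurry H) (z, t) (1, 0)) z := by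
  have h1 : HasDerivAt (fun u : ℝ => (u, t)) ((1 : ℝ), (0 : ℝ)) z :=
    (hasDerivAt_id z).prodMk (hasDerivAt_const z t)
  exact ((hH.differentiable (by simp) (z, t)).hasFDerivAt).comp_hasDerivAt z h1

lemma hasDerivAt_snd (H : ℝ → ℝ → ℝ) (hH : ContDiff ℝ (⊤ : ℕ∞) (uncurry H)) (z t : ℝ) :
    HasDerivAt (fun s => H z s) (fderiv ℝ (uncurry H) (z, t) (0, 1)) t := by
  have h1 : HasDerivAt (fun s : ℝ => (z, s)) ((0 : ℝ), (1 : ℝ)) t :=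
    (hasDerivAt_const t z).prodMk (hasDerivAt_id t)
  exact ((hH.differentiable (by simp) (z, t)).hasFDerivAt).comp_hasDerivAt t h1

lemma pdz_eq (H : ℝ → ℝ → ℝ) (hH : ContDiff ℝ (⊤ : ℕ∞) (uncurry H)) (z t : ℝ) :
    pdz H z t = fderiv ℝ (uncurry H) (z, t) (1, 0) := (hasDerivAt_fst H hH z t).deriv

lemma pdy_eq (H : ℝ → ℝ → ℝ) (hH : ContDiff ℝ (⊤ : ℕ∞) (uncurry H)) (z t : ℝ) :
    pdy H z t = fderiv ℝ (uncurry H) (z, t) (0, 1) := (hasDerivAt_snd H hH z t).deriv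

lemma contDiff_pdz (H : ℝ → ℝ → ℝ) (hH : ContDiff ℝ (⊤ : ℕ∞) (uncurry H)) :
    ContDiff ℝ (⊤ : ℕ∞) (uncurry (pdz H)) := by
  have : uncurry (pdz H) = fun p : ℝ × ℝ => fderiv ℝ (uncurry H) p ((1 : ℝ), (0 : ℝ)) := by
    funext p
    exact pdz_eq H hH p.1 p.2
  rw [this]
  exact (ContinuousLinearMap.apply ℝ ℝ ((1 : ℝ), (0 : ℝ))).contDiff.comp
    (hH.fderiv_right (by simp))

lemma contDiff_pdy (H : ℝ → ℝ → ℝ) (hH : ContDiff ℝ (⊤ : ℕ∞) (uncurry H)) :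
    ContDiff ℝ (⊤ : ℕ∞) (uncurry (pdy H)) := by
  have : uncurry (pdy H) = fun p : ℝ × ℝ => fderiv ℝ (uncurry H) p ((0 : ℝ), (1 : ℝ)) := by
    funext p
    exact pdy_eq H hH p.1 p.2
  rw [this]
  exact (ContinuousLinearMap.apply ℝ ℝ ((0 : ℝ), (1 : ℝ))).contDiff.comp
    (hH.fderiv_right (by simp))

/-- Clairaut -/
lemma pd_symm (H : ℝ → ℝ → ℝ) (hH : ContDiff ℝ (⊤ : ℕ∞) (uncurry H)) (z t : ℝ) :
    pdy (pdz H) z t = pdz (pdy H) z t := by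
  set f' : ℝ × ℝ → (ℝ × ℝ →L[ℝ] ℝ) := fderiv ℝ (uncurry H) with hf'
  have hf'c : ContDiff ℝ (⊤ : ℕ∞) f' := hH.fderiv_right (by simp)
  have hsymm := second_derivative_symmetric
    (fun p => (hH.differentiable (by simp) p).hasFDerivAt)
    ((hf'c.differentiable (by simp) (z, t)).hasFDerivAt)
  -- pdy (pdz H) z t
  have e1 : pdy (pdz H) z t = fderiv ℝ f' (z, t) (0, 1) (1, 0) := by
    have hfun : (fun s => pdz H z s) = fun s => f' (z, s) ((1 : ℝ), (0 : ℝ)) := by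
      funext s; exact pdz_eq H hH z s
    have h1 : HasDerivAt (fun s : ℝ => (z, s)) ((0 : ℝ), (1 : ℝ)) t :=
      (hasDerivAt_const t z).prodMk (hasDerivAt_id t)
    have h2 : HasDerivAt (fun s => f' (z, s)) (fderiv ℝ f' (z, t) (0, 1)) t :=
      ((hf'c.differentiable (by simp) (z, t)).hasFDerivAt).comp_hasDerivAt t h1
    have h3 : HasDerivAt (fun s => f' (z, s) ((1 : ℝ), (0 : ℝ)))
        (fderiv ℝ f' (z, t) (0, 1) (1, 0)) t :=
      ((ContinuousLinearMap.apply ℝ ℝ ((1 : ℝ), (0 : ℝ))).hasFDerivAt).comp_hasDerivAt t h2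
    show deriv (fun s => pdz H z s) t = _
    rw [hfun]
    exact h3.deriv
  have e2 : pdz (pdy H) z t = fderiv ℝ f' (z, t) (1, 0) (0, 1) := by
    have hfun : (fun u => pdy H u t) = fun u => f' (u, t) ((0 : ℝ), (1 : ℝ)) := by
      funext u; exact pdy_eq H hH u t
    have h1 : HasDerivAt (fun u : ℝ => (u, t)) ((1 : ℝ), (0 : ℝ)) z :=
      (hasDerivAt_id z).prodMk (hasDerivAt_const z t)
    have h2 : HasDerivAt (fun u => f' (u, t)) (fderiv ℝ f' (z, t) (1, 0)) z :=
      ((hf'c.differentiable (by simp) (z, t)).hasFDerivAt).comp_hasDerivAt z h1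
    have h3 : HasDerivAt (fun u => f' (u, t) ((0 : ℝ), (1 : ℝ)))
        (fderiv ℝ f' (z, t) (1, 0) (0, 1)) z :=
      ((ContinuousLinearMap.apply ℝ ℝ ((0 : ℝ), (1 : ℝ))).hasFDerivAt).comp_hasDerivAt z h2
    show deriv (fun u => pdy H u t) z = _
    rw [hfun]
    exact h3.deriv
  rw [e1, e2, hsymm]

/-- chain rule along the curve z ↦ (z, y z) -/
lemma hasDerivAt_curve (H : ℝ → ℝ → ℝ) (hH : ContDiff ℝ (⊤ : ℕ∞) (uncurry H))
    (y : ℝ → ℝ) (hy : Differentiable ℝ y) (z : ℝ) :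
    HasDerivAt (fun u => H u (y u))
      (pdz H z (y z) + pdy H z (y z) * deriv y z) z := by
  have hc : HasDerivAt (fun u : ℝ => (u, y u)) ((1 : ℝ), deriv y z) z :=
    (hasDerivAt_id z).prodMk (hy z).hasDerivAt
  have h := ((hH.differentiable (by simp) (z, y z)).hasFDerivAt).comp_hasDerivAt z hc
  have heq : fderiv ℝ (uncurry H) (z, y z) (1, deriv y z)
      = pdz H z (y z) + pdy H z (y z) * deriv y z := by
    have : ((1 : ℝ), deriv y z) = ((1 : ℝ), (0 : ℝ)) + deriv y z • ((0 : ℝ), (1 : ℝ)) := by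
      simp
    rw [this, map_add, map_smul, pdz_eq H hH, pdy_eq H hH]
    simp [smul_eq_mul, mul_comm]
  rwa [heq] at h

theorem stmt_6 (α β : ℝ) (F G : ℝ → ℝ → ℝ)
    (hF : ContDiff ℝ (⊤ : ℕ∞) (Function.uncurry F)) (hG : ContDiff ℝ (⊤ : ℕ∞) (Function.uncurry G))
    (hFyG : ∀ z t : ℝ, pdy F z t * G z t ≠ 0)
    (y : ℝ → ℝ) (hy : Differentiable ℝ y) (hy' : Differentiable ℝ (deriv y))
    (ζ : ℝ → ℝ) (hζ : ∀ z : ℝ, HasDerivAt ζ (G z (y z)) z)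
    (hconstr : ∀ z : ℝ,
      G z (y z) * pdy (pdy F) z (y z) - pdy F z (y z) * pdy G z (y z) = 0)
    (hlin : ∀ z : ℝ,
      deriv (fun u => (pdz F u (y u) + pdy F u (y u) * deriv y u) / G u (y u)) z
          / G z (y z)
        + β * ((pdz F z (y z) + pdy F z (y z) * deriv y z) / G z (y z))
        + α * F z (y z) = 0) :
    ∀ z : ℝ,
      deriv (deriv y) z
        + ((2 * G z (y z) * pdz (pdy F) z (y z) - pdy F z (y z) * pdz G z (y z)
              - pdz F z (y z) * pdy G z (y z) + β * G z (y z) ^ 2 * pdy F z (y z))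
            / (G z (y z) * pdy F z (y z))) * deriv y z
        + (G z (y z) * pdz (pdz F) z (y z) - pdz F z (y z) * pdz G z (y z)
              + β * G z (y z) ^ 2 * pdz F z (y z) + α * G z (y z) ^ 3 * F z (y z))
            / (G z (y z) * pdy F z (y z)) = 0 := by
  intro z
  have hGne : G z (y z) ≠ 0 := right_ne_zero_of_mul (hFyG z (y z))
  have hFyne : pdy F z (y z) ≠ 0 := left_ne_zero_of_mul (hFyG z (y z))
  have hpdzF := contDiff_pdz F hF
  have hpdyF := contDiff_pdy F hF
  have h1 : HasDerivAt (fun u => pdz F u (y u))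
      (pdz (pdz F) z (y z) + pdy (pdz F) z (y z) * deriv y z) z :=
    hasDerivAt_curve (pdz F) hpdzF y hy z
  have h2 : HasDerivAt (fun u => pdy F u (y u))
      (pdz (pdy F) z (y z) + pdy (pdy F) z (y z) * deriv y z) z :=
    hasDerivAt_curve (pdy F) hpdyF y hy z
  have h3 : HasDerivAt (deriv y) (deriv (deriv y) z) z := (hy' z).hasDerivAt
  have h4 : HasDerivAt (fun u => G u (y u))
      (pdz G z (y z) + pdy G z (y z) * deriv y z) z :=
    hasDerivAt_curve G hG y hy z
  have hA : HasDerivAt (fun u => pdz F u (y u) + pdy F u (y u) * deriv y u)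
      ((pdz (pdz F) z (y z) + pdy (pdz F) z (y z) * deriv y z)
        + ((pdz (pdy F) z (y z) + pdy (pdy F) z (y z) * deriv y z) * deriv y z
            + pdy F z (y z) * deriv (deriv y) z)) z := h1.add (h2.mul h3)
  have hq : HasDerivAt (fun u => (pdz F u (y u) + pdy F u (y u) * deriv y u) / G u (y u)) _ z :=
    hA.div h4 hGne
  have hE := hlin z
  rw [hq.deriv] at hE
  rw [pd_symm F hF z (y z)] at hE
  have hc := hconstr z
  set b := pdy F z (y z)
  set g := G z (y z)
  set a := pdz F z (y z)
  set gz := pdz G z (y z)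
  set gy := pdy G z (y z)
  set fzz := pdz (pdz F) z (y z)
  set fzy := pdz (pdy F) z (y z)
  set fyy := pdy (pdy F) z (y z)
  set y1 := deriv y z
  set y2 := deriv (deriv y) z
  set Fv := F z (y z)
  field_simp at hE
  have hT : g * (y2 * (g * b) + (2 * g * fzy - b * gz - a * gy + β * g ^ 2 * b) * y1
      + (g * fzz - a * gz + β * g ^ 2 * a + α * g ^ 3 * Fv)) = 0 := by
    linear_combination g * hE - g * y1 ^ 2 * hc
  have hT2 : y2 * (g * b) + (2 * g * fzy - b * gz - a * gy + β * g ^ 2 * b) * y1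
      + (g * fzz - a * gz + β * g ^ 2 * a + α * g ^ 3 * Fv) = 0 :=
    (mul_eq_zero.mp hT).resolve_left hGne
  field_simp
  linear_combination hT2
end

section
/- The function y(z) = ± e^{δz} (w(ζ(z)) + 2δ²/α)^{1/2}, given parametrically with dζ/dz = e^{-δz} y = ±(w + 2δ²/α)^{1/2}, solves the non-autonomous Duffing-type equation y'' + (β e^{-δz} y - 2δ) y' + (e^{-δz}/2) y² (α e^{-δz} y - 2βδ) = 0 whenever w solves w_ζζ + β w_ζ + α w = 0 and w + 2δ²/α > 0. -/
/-!
Write `G z = e^{-δz} y z = ε √(w (ζ z) + 2δ²/α)`. Since `ζ' = G` and `G² = w ∘ ζ + 2δ²/α`, the chain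
rule gives `G' = w'(ζ)/2` and `G'' = w''(ζ) G / 2`. Substituting `y = e^{δz} G` turns the
non-autonomous equation into the autonomous one `G'' + β G G' + (α/2) G³ - δ² G = 0`, and the linear
equation for `w` together with `w(ζ) = G² - 2δ²/α` makes its left-hand side vanish.
-/

open Real

theorem hasDerivAt_sign_mul_sqrt_of_sundman {w ζ G : ℝ → ℝ} {c ε : ℝ} (hε : ε ^ 2 = 1)
    (hw : Differentiable ℝ w) (hpos : ∀ z, 0 < w (ζ z) + c)
    (hG : ∀ z, G z = ε * √(w (ζ z) + c)) (hζ : ∀ z, HasDerivAt ζ (G z) z) (z : ℝ) :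
    HasDerivAt G (deriv w (ζ z) / 2) z := by
  have hu : HasDerivAt (fun z => w (ζ z) + c) (deriv w (ζ z) * G z) z :=
    ((hw _).hasDerivAt.comp z (hζ z)).add_const c
  have hsqrt := (hu.sqrt (hpos z).ne').const_mul ε
  rw [← funext hG] at hsqrt
  refine hsqrt.congr_deriv ?_
  have hs : √(w (ζ z) + c) ≠ 0 := (sqrt_pos.2 (hpos z)).ne'
  rw [hG z]
  field_simp
  linear_combination deriv w (ζ z) * hε

theorem duffing_exp_mul {G g h : ℝ → ℝ} (α β δ : ℝ) (hG : ∀ z, HasDerivAt G (g z) z)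
    (hg : ∀ z, HasDerivAt g (h z) z) (z : ℝ) :
    let y := fun z => exp (δ * z) * G z
    deriv (deriv y) z + (β * exp (-(δ * z)) * y z - 2 * δ) * deriv y z
        + (exp (-(δ * z)) / 2) * y z ^ 2 * (α * exp (-(δ * z)) * y z - 2 * β * δ)
      = exp (δ * z) * (h z + β * G z * g z + α / 2 * G z ^ 3 - δ ^ 2 * G z) := by
  intro y
  have hexp : ∀ z, HasDerivAt (fun z => exp (δ * z)) (exp (δ * z) * δ) z := fun z =>
    ((hasDerivAt_id z).const_mul δ).exp.congr_deriv (by simp)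
  have hy : ∀ z, HasDerivAt y (exp (δ * z) * (δ * G z + g z)) z := fun z =>
    ((hexp z).mul (hG z)).congr_deriv (by ring)
  have hy' : HasDerivAt (fun z => exp (δ * z) * (δ * G z + g z))
      (exp (δ * z) * (δ ^ 2 * G z + 2 * δ * g z + h z)) z :=
    ((hexp z).mul (((hG z).const_mul δ).add (hg z))).congr_deriv (by simp only [Pi.add_apply]; ring)
  rw [show deriv y = _ from funext fun z => (hy z).deriv, hy'.deriv, exp_neg]
  field_simp
  ring

theorem stmt_10 (α β δ : ℝ) (hα : α ≠ 0) (ε : ℝ) (hε : ε = 1 ∨ ε = -1)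
    (w : ℝ → ℝ) (hw : Differentiable ℝ w) (hw' : Differentiable ℝ (deriv w))
    (hweq : ∀ ζ : ℝ, deriv (deriv w) ζ + β * deriv w ζ + α * w ζ = 0)
    (hpos : ∀ ζ : ℝ, 0 < w ζ + 2 * δ ^ 2 / α)
    (y ζ : ℝ → ℝ)
    (hζ : ∀ z : ℝ, HasDerivAt ζ (Real.exp (-(δ * z)) * y z) z)
    (hy : ∀ z : ℝ, y z = ε * Real.exp (δ * z) * Real.sqrt (w (ζ z) + 2 * δ ^ 2 / α)) :
    ∀ z : ℝ,
      deriv (deriv y) z + (β * Real.exp (-(δ * z)) * y z - 2 * δ) * deriv y z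
        + (Real.exp (-(δ * z)) / 2) * y z ^ 2 *
            (α * Real.exp (-(δ * z)) * y z - 2 * β * δ) = 0 := by
  set G := fun z => ε * √(w (ζ z) + 2 * δ ^ 2 / α)
  have hyG : y = fun z => exp (δ * z) * G z := funext fun z => by rw [hy z]; ring
  have hζG : ∀ z, HasDerivAt ζ (G z) z := fun z => by
    simpa [hyG, ← mul_assoc, ← exp_add] using hζ z
  have hε2 : ε ^ 2 = 1 := by rcases hε with rfl | rfl <;> norm_num
  have hG := hasDerivAt_sign_mul_sqrt_of_sundman hε2 hw (fun z => hpos (ζ z)) (fun _ => rfl) hζG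
  have hg : ∀ z, HasDerivAt (fun z => deriv w (ζ z) / 2) (deriv (deriv w) (ζ z) * G z / 2) z :=
    fun z => ((hw' _).hasDerivAt.comp z (hζG z)).div_const 2
  have hGsq : ∀ z, G z ^ 2 = w (ζ z) + 2 * δ ^ 2 / α := fun z => by
    rw [mul_pow, sq_sqrt (hpos _).le, hε2, one_mul]
  intro z
  rw [hyG, duffing_exp_mul α β δ hG hg z]
  have hw_of_G : α * w (ζ z) = α * G z ^ 2 - 2 * δ ^ 2 := by
    rw [hGsq]; field_simp; ring
  linear_combination (exp (δ * z) * G z / 2) * (hweq (ζ z) - hw_of_G)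
end

section
/- Let δ, β be reals, α ≠ 0, ρ = sqrt(β² - 4α) with β² - 4α > 0. If y solves y'' + (β e^{-δz} y - 2δ) y' + (e^{-δz}/2) y²(α e^{-δz} y - 2βδ) = 0 on an interval, then I(z) = e^{-2ρδz} · (2y' - 2δy + β e^{-δz} y² - (2βδ²/α) e^{δz} - (e^{δz}/(2α))(β-ρ)(α e^{-2δz} y² - 2δ²))^{ρ+β} · (2y' - 2δy + β e^{-δz} y² - (2βδ²/α) e^{δz} - (e^{δz}/(2α))(β+ρ)(α e^{-2δz} y² - 2δ²))^{ρ-β} is constant on any subinterval where both base expressions are positive. -/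
/-!
Write `E = exp (-(δ z))`. Along a solution, `K = 2y' - 2δy + βEy² - (2βδ²/α) e^{δz}` and
`G = Ey²/2 - (δ²/α) e^{δz}` satisfy the linear system `K' = δK - 2αEyG`,
`G' = δG + (Ey/2)(K - 2βG)`. For each root `c = β ∓ ρ` of `c² - 2βc + 4α = 0` the combination
`K - cG`, which is one of the two bases of the integral, is then a left eigenvector:
`(K - cG)' = (δ - cEy/2)(K - cG)`. Since `(ρ + β)(β - ρ) + (ρ - β)(β + ρ) = 0`, the `Ey` terms cancel in
the logarithmic derivative of `e^{-2ρδz} A^{ρ+β} B^{ρ-β}`, which is `(ρ + β)δ + (ρ - β)δ - 2ρδ = 0`.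
-/

open Real Set

theorem exp_neg_mul_rpow_mul_rpow_eq_of_hasDerivAt {s : Set ℝ} (hs : IsOpen s) (hs' : IsPreconnected s)
    {f g φ ψ : ℝ → ℝ} {p q r : ℝ}
    (hf : ∀ z ∈ s, HasDerivAt f (φ z * f z) z) (hg : ∀ z ∈ s, HasDerivAt g (ψ z * g z) z)
    (hf₀ : ∀ z ∈ s, 0 < f z) (hg₀ : ∀ z ∈ s, 0 < g z) (hr : ∀ z ∈ s, p * φ z + q * ψ z = r)
    {x x' : ℝ} (hx : x ∈ s) (hx' : x' ∈ s) :
    exp (-(r * x)) * f x ^ p * g x ^ q = exp (-(r * x')) * f x' ^ p * g x' ^ q := by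
  set L : ℝ → ℝ := fun z => -(r * z) + p * log (f z) + q * log (g z)
  have hL : ∀ z ∈ s, HasDerivAt L 0 z := fun z hz => by
    have h : HasDerivAt L (-(r * 1) + p * (φ z * f z / f z) + q * (ψ z * g z / g z)) z :=
      ((((hasDerivAt_id z).const_mul r).neg.add
      (((hf z hz).log (hf₀ z hz).ne').const_mul p)).add
      (((hg z hz).log (hg₀ z hz).ne').const_mul q))
    convert h using 1
    field_simp [(hf₀ z hz).ne', (hg₀ z hz).ne']
    linear_combination -(hr z hz)
  have hexp : ∀ z ∈ s, exp (-(r * z)) * f z ^ p * g z ^ q = exp (L z) := fun z hz => by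
    simp only [L, exp_add, rpow_def_of_pos (hf₀ z hz), rpow_def_of_pos (hg₀ z hz), mul_comm (log _)]
  rw [hexp x hx, hexp x' hx', hs.is_const_of_deriv_eq_zero hs'
    (fun z hz => (hL z hz).differentiableAt.differentiableWithinAt)
    (fun z hz => (hL z hz).deriv) hx hx']

noncomputable section

namespace DampedDuffing

variable (α β δ : ℝ) (y : ℝ → ℝ)

def K (z : ℝ) : ℝ :=
  2 * deriv y z - 2 * δ * y z + β * exp (-(δ * z)) * y z ^ 2 - 2 * β * δ ^ 2 / α * exp (δ * z)

def G (z : ℝ) : ℝ := exp (δ * z) / (2 * α) * (α * exp (-(2 * δ * z)) * y z ^ 2 - 2 * δ ^ 2)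

def factor (c z : ℝ) : ℝ :=
  K α β δ y z - exp (δ * z) / (2 * α) * c * (α * exp (-(2 * δ * z)) * y z ^ 2 - 2 * δ ^ 2)

theorem factor_eq (c z : ℝ) : factor α β δ y c z = K α β δ y z - c * G α δ y z := by
  unfold factor G; ring

variable {α β δ y}

theorem G_eq (hα : α ≠ 0) (z : ℝ) :
    G α δ y z = exp (-(δ * z)) * y z ^ 2 / 2 - δ ^ 2 / α * exp (δ * z) := by
  have h : exp (δ * z) * exp (-(2 * δ * z)) = exp (-(δ * z)) := by rw [← exp_add]; ring_nf
  calc G α δ y z = exp (δ * z) * exp (-(2 * δ * z)) * y z ^ 2 / 2 - δ ^ 2 / α * exp (δ * z) := by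
        unfold G; field_simp
    _ = _ := by rw [h]

theorem hasDerivAt_G {w : ℝ} (hα : α ≠ 0) (hy : DifferentiableAt ℝ y w) :
    HasDerivAt (G α δ y) (δ * G α δ y w + exp (-(δ * w)) * y w * (deriv y w - δ * y w)) w := by
  have h := ((((hasDerivAt_id' w).const_mul δ).neg.exp.mul (hy.hasDerivAt.pow 2)).div_const 2).sub
    (((hasDerivAt_id' w).const_mul δ).exp.const_mul (δ ^ 2 / α))
  rw [show G α δ y = _ from funext (G_eq hα)]
  exact h.congr_deriv (by simp only [Pi.pow_apply, Pi.neg_apply]; ring)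

theorem hasDerivAt_K {w : ℝ} (hα : α ≠ 0) (hy : DifferentiableAt ℝ y w)
    (hy' : DifferentiableAt ℝ (deriv y) w)
    (hode : deriv (deriv y) w + (β * exp (-(δ * w)) * y w - 2 * δ) * deriv y w
      + exp (-(δ * w)) / 2 * y w ^ 2 * (α * exp (-(δ * w)) * y w - 2 * β * δ) = 0) :
    HasDerivAt (K α β δ y) (δ * K α β δ y w - 2 * α * (exp (-(δ * w)) * y w) * G α δ y w) w := by
  have h : HasDerivAt (K α β δ y) _ w :=
    (((hy'.hasDerivAt.const_mul 2).sub (hy.hasDerivAt.const_mul (2 * δ))).add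
      ((((hasDerivAt_id' w).const_mul δ).neg.exp.const_mul β).mul (hy.hasDerivAt.pow 2))).sub
    (((hasDerivAt_id' w).const_mul δ).exp.const_mul (2 * β * δ ^ 2 / α))
  refine h.congr_deriv ?_
  have hE : exp (δ * w) * exp (-(δ * w)) = 1 := by rw [← exp_add]; simp
  rw [G_eq hα]
  unfold K
  simp only [Pi.pow_apply, Pi.neg_apply]
  field_simp
  linear_combination 2 * α * hode - 2 * α * δ ^ 2 * y w * hE

theorem K_sub_two_mul_G (hα : α ≠ 0) (z : ℝ) :
    K α β δ y z - 2 * β * G α δ y z = 2 * (deriv y z - δ * y z) := by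
  rw [G_eq hα]; unfold K; ring

theorem hasDerivAt_factor {c w : ℝ} (hα : α ≠ 0) (hy : DifferentiableAt ℝ y w)
    (hy' : DifferentiableAt ℝ (deriv y) w)
    (hode : deriv (deriv y) w + (β * exp (-(δ * w)) * y w - 2 * δ) * deriv y w
      + exp (-(δ * w)) / 2 * y w ^ 2 * (α * exp (-(δ * w)) * y w - 2 * β * δ) = 0)
    (hc : c ^ 2 - 2 * β * c + 4 * α = 0) :
    HasDerivAt (factor α β δ y c) ((δ - c / 2 * (exp (-(δ * w)) * y w)) * factor α β δ y c w) w := by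
  rw [show factor α β δ y c = _ from funext (factor_eq α β δ y c)]
  beta_reduce
  refine ((hasDerivAt_K hα hy hy' hode).sub ((hasDerivAt_G hα hy).const_mul c)).congr_deriv ?_
  linear_combination c * exp (-(δ * w)) * y w / 2 * K_sub_two_mul_G (β := β) hα w
    - exp (-(δ * w)) * y w * G α δ y w / 2 * hc

end DampedDuffing

end

theorem stmt_11 (α β δ : ℝ) (hα : α ≠ 0) (hdisc : β ^ 2 - 4 * α > 0)
    (ρ : ℝ) (hρ : ρ = Real.sqrt (β ^ 2 - 4 * α))
    (y : ℝ → ℝ) (hy : Differentiable ℝ y) (hy' : Differentiable ℝ (deriv y))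
    (a b : ℝ)
    (heq : ∀ z ∈ Set.Ioo a b,
      deriv (deriv y) z + (β * Real.exp (-(δ * z)) * y z - 2 * δ) * deriv y z
        + (Real.exp (-(δ * z)) / 2) * y z ^ 2 *
            (α * Real.exp (-(δ * z)) * y z - 2 * β * δ) = 0)
    (c d : ℝ) (hsub : Set.Ioo c d ⊆ Set.Ioo a b)
    (hpos : ∀ z ∈ Set.Ioo c d,
      0 < 2 * deriv y z - 2 * δ * y z + β * Real.exp (-(δ * z)) * y z ^ 2
            - (2 * β * δ ^ 2 / α) * Real.exp (δ * z)
            - (Real.exp (δ * z) / (2 * α)) * (β - ρ) *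
                (α * Real.exp (-(2 * δ * z)) * y z ^ 2 - 2 * δ ^ 2) ∧
      0 < 2 * deriv y z - 2 * δ * y z + β * Real.exp (-(δ * z)) * y z ^ 2
            - (2 * β * δ ^ 2 / α) * Real.exp (δ * z)
            - (Real.exp (δ * z) / (2 * α)) * (β + ρ) *
                (α * Real.exp (-(2 * δ * z)) * y z ^ 2 - 2 * δ ^ 2)) :
    ∀ x ∈ Set.Ioo c d, ∀ x' ∈ Set.Ioo c d,
      Real.exp (-(2 * ρ * δ * x)) *
        (2 * deriv y x - 2 * δ * y x + β * Real.exp (-(δ * x)) * y x ^ 2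
            - (2 * β * δ ^ 2 / α) * Real.exp (δ * x)
            - (Real.exp (δ * x) / (2 * α)) * (β - ρ) *
                (α * Real.exp (-(2 * δ * x)) * y x ^ 2 - 2 * δ ^ 2)) ^ (ρ + β) *
        (2 * deriv y x - 2 * δ * y x + β * Real.exp (-(δ * x)) * y x ^ 2
            - (2 * β * δ ^ 2 / α) * Real.exp (δ * x)
            - (Real.exp (δ * x) / (2 * α)) * (β + ρ) *
                (α * Real.exp (-(2 * δ * x)) * y x ^ 2 - 2 * δ ^ 2)) ^ (ρ - β)
      = Real.exp (-(2 * ρ * δ * x')) *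
        (2 * deriv y x' - 2 * δ * y x' + β * Real.exp (-(δ * x')) * y x' ^ 2
            - (2 * β * δ ^ 2 / α) * Real.exp (δ * x')
            - (Real.exp (δ * x') / (2 * α)) * (β - ρ) *
                (α * Real.exp (-(2 * δ * x')) * y x' ^ 2 - 2 * δ ^ 2)) ^ (ρ + β) *
        (2 * deriv y x' - 2 * δ * y x' + β * Real.exp (-(δ * x')) * y x' ^ 2
            - (2 * β * δ ^ 2 / α) * Real.exp (δ * x')
            - (Real.exp (δ * x') / (2 * α)) * (β + ρ) *
                (α * Real.exp (-(2 * δ * x')) * y x' ^ 2 - 2 * δ ^ 2)) ^ (ρ - β) := by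
  have hρ2 : ρ ^ 2 = β ^ 2 - 4 * α := hρ ▸ sq_sqrt hdisc.le
  have hfactor : ∀ k, k ^ 2 - 2 * β * k + 4 * α = 0 → ∀ z ∈ Ioo c d,
      HasDerivAt (DampedDuffing.factor α β δ y k)
        ((δ - k / 2 * (exp (-(δ * z)) * y z)) * DampedDuffing.factor α β δ y k z) z :=
    fun k hc z hz => DampedDuffing.hasDerivAt_factor hα (hy z) (hy' z) (heq z (hsub hz)) hc
  intro x hx x' hx'
  exact exp_neg_mul_rpow_mul_rpow_eq_of_hasDerivAt isOpen_Ioo isPreconnected_Ioo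
    (hfactor (β - ρ) (by linear_combination hρ2)) (hfactor (β + ρ) (by linear_combination hρ2))
    (fun z hz => (hpos z hz).1) (fun z hz => (hpos z hz).2) (fun z _ => by ring) hx hx'
end

section
/- Let s : ℝ → ℝ be differentiable and α, β, ρ ∈ ℝ with ρ² = β² - 4α, ρ > 0. If y solves y'' + (2β y + 3 s(z)) y' + 2α y³ + 2β s(z) y² + (2 s(z)² + s'(z)) y = 0, and S is an antiderivative of s, then I(z) = e^{4ρ S(z)} (2y' + 2 s y + (β+ρ) y²)^{ρ+β} (2y' + 2 s y + (β-ρ) y²)^{ρ-β} is constant on any interval where both bases 2y' + 2sy + (β±ρ)y² are positive. -/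
/-!
Both factors `2y' + 2sy + γy²`, for `γ = β ± ρ`, are "Darboux polynomials" of the equation: along
a solution each one is multiplied by its own cofactor, `-(2s + δy)` with `δ = 2β - γ`, because
`β ± ρ` are the two roots of `γ² - 2βγ + 4α`. The log-derivative of `I` is therefore
`4ρs - (ρ+β)(2s + (β-ρ)y) - (ρ-β)(2s + (β+ρ)y)`, which vanishes identically.
-/

open Real Set

theorem exp_mul_rpow_mul_rpow_eq_exp_add {P Q : ℝ} (c m n : ℝ) (hP : 0 < P) (hQ : 0 < Q) :
    exp c * P ^ m * Q ^ n = exp (c + m * log P + n * log Q) := by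
  rw [rpow_def_of_pos hP, rpow_def_of_pos hQ, exp_add, exp_add, mul_comm m, mul_comm n]

theorem IsOpen.exp_mul_rpow_mul_rpow_eq_of_logDeriv {U : Set ℝ} {S P Q s p q : ℝ → ℝ}
    {c m n : ℝ} (hU : IsOpen U) (hU' : IsPreconnected U)
    (hS : ∀ z ∈ U, HasDerivAt S (s z) z)
    (hP : ∀ z ∈ U, HasDerivAt P (p z * P z) z) (hQ : ∀ z ∈ U, HasDerivAt Q (q z * Q z) z)
    (hPpos : ∀ z ∈ U, 0 < P z) (hQpos : ∀ z ∈ U, 0 < Q z)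
    (hcancel : ∀ z ∈ U, c * s z + m * p z + n * q z = 0) {x x' : ℝ} (hx : x ∈ U)
    (hx' : x' ∈ U) :
    exp (c * S x) * P x ^ m * Q x ^ n = exp (c * S x') * P x' ^ m * Q x' ^ n := by
  set F : ℝ → ℝ := fun z ↦ c * S z + m * log (P z) + n * log (Q z)
  have hF : ∀ z ∈ U, HasDerivAt F 0 z := by
    intro z hz
    have hPz := (hPpos z hz).ne'
    have hQz := (hQpos z hz).ne'
    refine ((((hS z hz).const_mul c).add (((hP z hz).log hPz).const_mul m)).add
      (((hQ z hz).log hQz).const_mul n)).congr_deriv ?_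
    rw [← hcancel z hz]
    field_simp
  have hFconst : F x = F x' :=
    hU.is_const_of_deriv_eq_zero hU' (fun z hz ↦ (hF z hz).differentiableAt.differentiableWithinAt)
      (fun z hz ↦ (hF z hz).deriv) hx hx'
  rw [exp_mul_rpow_mul_rpow_eq_exp_add _ _ _ (hPpos x hx) (hQpos x hx),
    exp_mul_rpow_mul_rpow_eq_exp_add _ _ _ (hPpos x' hx') (hQpos x' hx')]
  exact congrArg exp hFconst

noncomputable def duffingFactor (s y : ℝ → ℝ) (γ z : ℝ) : ℝ :=
  2 * deriv y z + 2 * s z * y z + γ * y z ^ 2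

theorem hasDerivAt_duffingFactor {α β γ δ : ℝ} (hsum : γ + δ = 2 * β) (hprod : γ * δ = 4 * α)
    {s y : ℝ → ℝ} {z : ℝ} (hs : DifferentiableAt ℝ s z) (hy : DifferentiableAt ℝ y z)
    (hy' : DifferentiableAt ℝ (deriv y) z)
    (heq : deriv (deriv y) z + (2 * β * y z + 3 * s z) * deriv y z
        + 2 * α * y z ^ 3 + 2 * β * s z * y z ^ 2 + (2 * s z ^ 2 + deriv s z) * y z = 0) :
    HasDerivAt (duffingFactor s y γ) (-(2 * s z + δ * y z) * duffingFactor s y γ z) z := by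
  refine (((hy'.hasDerivAt.const_mul 2).add ((hs.hasDerivAt.const_mul 2).mul hy.hasDerivAt)).add
    ((hy.hasDerivAt.pow 2).const_mul γ)).congr_deriv ?_
  have hδ : δ = 2 * β - γ := by linear_combination hsum
  subst hδ
  simp only [duffingFactor]
  push_cast
  linear_combination 2 * heq + y z ^ 3 * hprod

theorem stmt_12_general (α β ρ : ℝ) (hρ : ρ ^ 2 = β ^ 2 - 4 * α)
    (s S : ℝ → ℝ) (hs : Differentiable ℝ s)
    (hS : ∀ z : ℝ, HasDerivAt S (s z) z)
    (y : ℝ → ℝ) (hy : Differentiable ℝ y) (hy' : Differentiable ℝ (deriv y))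
    (heq : ∀ z : ℝ,
      deriv (deriv y) z + (2 * β * y z + 3 * s z) * deriv y z
        + 2 * α * y z ^ 3 + 2 * β * s z * y z ^ 2 + (2 * s z ^ 2 + deriv s z) * y z = 0)
    (a b : ℝ)
    (hpos : ∀ z ∈ Set.Ioo a b,
      0 < 2 * deriv y z + 2 * s z * y z + (β + ρ) * y z ^ 2 ∧
      0 < 2 * deriv y z + 2 * s z * y z + (β - ρ) * y z ^ 2) :
    ∀ x ∈ Set.Ioo a b, ∀ x' ∈ Set.Ioo a b,
      Real.exp (4 * ρ * S x) *
        (2 * deriv y x + 2 * s x * y x + (β + ρ) * y x ^ 2) ^ (ρ + β) *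
        (2 * deriv y x + 2 * s x * y x + (β - ρ) * y x ^ 2) ^ (ρ - β)
      = Real.exp (4 * ρ * S x') *
        (2 * deriv y x' + 2 * s x' * y x' + (β + ρ) * y x' ^ 2) ^ (ρ + β) *
        (2 * deriv y x' + 2 * s x' * y x' + (β - ρ) * y x' ^ 2) ^ (ρ - β) := by
  have hroots : (β + ρ) * (β - ρ) = 4 * α := by linear_combination -hρ
  intro x hx x' hx'
  exact isOpen_Ioo.exp_mul_rpow_mul_rpow_eq_of_logDeriv (P := duffingFactor s y (β + ρ))
    (Q := duffingFactor s y (β - ρ)) isPreconnected_Ioo (fun z _ ↦ hS z)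
    (fun z _ ↦ hasDerivAt_duffingFactor (δ := β - ρ) (by ring) hroots (hs z) (hy z) (hy' z) (heq z))
    (fun z _ ↦ hasDerivAt_duffingFactor (δ := β + ρ) (by ring) (by linear_combination hroots)
      (hs z) (hy z) (hy' z) (heq z))
    (fun z hz ↦ (hpos z hz).1) (fun z hz ↦ (hpos z hz).2) (fun z _ ↦ by ring) hx hx'

theorem stmt_12 (α β ρ : ℝ) (hρ : ρ ^ 2 = β ^ 2 - 4 * α) (hρpos : 0 < ρ)
    (s S : ℝ → ℝ) (hs : Differentiable ℝ s)
    (hS : ∀ z : ℝ, HasDerivAt S (s z) z)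
    (y : ℝ → ℝ) (hy : Differentiable ℝ y) (hy' : Differentiable ℝ (deriv y))
    (heq : ∀ z : ℝ,
      deriv (deriv y) z + (2 * β * y z + 3 * s z) * deriv y z
        + 2 * α * y z ^ 3 + 2 * β * s z * y z ^ 2 + (2 * s z ^ 2 + deriv s z) * y z = 0)
    (a b : ℝ)
    (hpos : ∀ z ∈ Set.Ioo a b,
      0 < 2 * deriv y z + 2 * s z * y z + (β + ρ) * y z ^ 2 ∧
      0 < 2 * deriv y z + 2 * s z * y z + (β - ρ) * y z ^ 2) :
    ∀ x ∈ Set.Ioo a b, ∀ x' ∈ Set.Ioo a b,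
      Real.exp (4 * ρ * S x) *
        (2 * deriv y x + 2 * s x * y x + (β + ρ) * y x ^ 2) ^ (ρ + β) *
        (2 * deriv y x + 2 * s x * y x + (β - ρ) * y x ^ 2) ^ (ρ - β)
      = Real.exp (4 * ρ * S x') *
        (2 * deriv y x' + 2 * s x' * y x' + (β + ρ) * y x' ^ 2) ^ (ρ + β) *
        (2 * deriv y x' + 2 * s x' * y x' + (β - ρ) * y x' ^ 2) ^ (ρ - β) :=
  stmt_12_general α β ρ hρ s S hs hS y hy hy' heq a b hpos
end

section
/- Let s : ℝ → ℝ be differentiable with antiderivative S (S' = s), let β, ρ ∈ ℝ with ρ² = β² - 4α, and let C₁ ∈ ℝ. Then y(z) = 2 e^{-S(z)} / ((β + ρ) ∫₀^z e^{-S(t)} dt + C₁) solves the forced Duffing equation y'' + (2β y + 3s) y' + 2α y³ + 2β s y² + (2s² + s') y = 0 on any interval where the denominator is nonzero. -/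
/-!
Since `D = (β + ρ) ∫₀^z e^{-S} + C₁` has `D' = (β + ρ) e^{-S}`, the function `y = 2 e^{-S} / D`
solves the Riccati equation `y' = -s y - k y²` with `k = (β + ρ) / 2`. Differentiating it once more
and eliminating `y'` and `y''`, the Duffing expression becomes `2 (α - k (β - k)) y³`, and
`k (β - k) = (β² - ρ²) / 4 = α`.
-/

open Real

theorem hasDerivAt_integral_exp_neg {S : ℝ → ℝ} (hS : Continuous S) (z : ℝ) :
    HasDerivAt (fun u => ∫ t in (0:ℝ)..u, exp (-S t)) (exp (-S z)) z := by
  have hE : Continuous fun t => exp (-S t) := continuous_exp.comp hS.neg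
  exact intervalIntegral.integral_hasDerivAt_right (hE.intervalIntegrable _ _)
    (hE.stronglyMeasurableAtFilter _ _) hE.continuousAt

theorem hasDerivAt_two_mul_exp_neg_div {S I : ℝ → ℝ} {s c C z : ℝ}
    (hS : HasDerivAt S s z) (hI : HasDerivAt I (exp (-S z)) z) (hD : c * I z + C ≠ 0) :
    HasDerivAt (fun u => 2 * exp (-S u) / (c * I u + C))
      (-(s * (2 * exp (-S z) / (c * I z + C)))
        - c / 2 * (2 * exp (-S z) / (c * I z + C)) ^ 2) z := by
  have h : HasDerivAt (fun u => 2 * exp (-S u) / (c * I u + C))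
      ((2 * (exp (-S z) * -s) * (c * I z + C) - 2 * exp (-S z) * (c * exp (-S z)))
        / (c * I z + C) ^ 2) z :=
    ((hS.neg.exp).const_mul 2).div ((hI.const_mul c).add_const C) hD
  convert h using 1
  field_simp

theorem deriv_deriv_of_riccati {s y : ℝ → ℝ} {k z : ℝ} {U : Set ℝ} (hU : IsOpen U)
    (hy : ∀ w ∈ U, HasDerivAt y (-(s w * y w) - k * y w ^ 2) w) (hz : z ∈ U)
    (hs : DifferentiableAt ℝ s z) :
    deriv (deriv y) z = -(deriv s z * y z) - (s z + 2 * k * y z) * deriv y z := by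
  have hdy : deriv y =ᶠ[nhds z] fun w => -(s w * y w) - k * y w ^ 2 :=
    Filter.eventually_of_mem (hU.mem_nhds hz) fun w hw => (hy w hw).deriv
  have hyz := hy z hz
  rw [hdy.deriv_eq,
    ((hs.hasDerivAt.fun_mul hyz).fun_neg.fun_sub ((hyz.fun_pow 2).const_mul k)).deriv, hyz.deriv]
  push_cast
  ring

theorem duffing_of_riccati {s y : ℝ → ℝ} {α β k z : ℝ} {U : Set ℝ} (hα : α = k * (β - k))
    (hU : IsOpen U) (hy : ∀ w ∈ U, HasDerivAt y (-(s w * y w) - k * y w ^ 2) w) (hz : z ∈ U)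
    (hs : DifferentiableAt ℝ s z) :
    deriv (deriv y) z + (2 * β * y z + 3 * s z) * deriv y z
      + 2 * α * y z ^ 3 + 2 * β * s z * y z ^ 2
      + (2 * s z ^ 2 + deriv s z) * y z = 0 := by
  rw [deriv_deriv_of_riccati hU hy hz hs, (hy z hz).deriv, hα]
  ring

theorem stmt_13 (α β ρ : ℝ) (hρ : ρ ^ 2 = β ^ 2 - 4 * α) (C₁ : ℝ)
    (s S : ℝ → ℝ) (hs : Differentiable ℝ s)
    (hS : ∀ z : ℝ, HasDerivAt S (s z) z)
    (y : ℝ → ℝ)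
    (hy : ∀ z : ℝ, y z =
      2 * Real.exp (-S z) /
        ((β + ρ) * (∫ t in (0:ℝ)..z, Real.exp (-S t)) + C₁))
    (a b : ℝ)
    (hden : ∀ z ∈ Set.Ioo a b,
      (β + ρ) * (∫ t in (0:ℝ)..z, Real.exp (-S t)) + C₁ ≠ 0) :
    ∀ z ∈ Set.Ioo a b,
      deriv (deriv y) z + (2 * β * y z + 3 * s z) * deriv y z
        + 2 * α * y z ^ 3 + 2 * β * s z * y z ^ 2
        + (2 * s z ^ 2 + deriv s z) * y z = 0 := by
  intro z hz
  have hScont : Continuous S := continuous_iff_continuousAt.2 fun w => (hS w).continuousAt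
  have hα : α = (β + ρ) / 2 * (β - (β + ρ) / 2) := by linear_combination hρ / 4
  have hriccati : ∀ w ∈ Set.Ioo a b,
      HasDerivAt y (-(s w * y w) - (β + ρ) / 2 * y w ^ 2) w := by
    intro w hw
    rw [funext hy]
    exact hasDerivAt_two_mul_exp_neg_div (hS w) (hasDerivAt_integral_exp_neg hScont w) (hden w hw)
  exact duffing_of_riccati hα isOpen_Ioo hriccati hz (hs z)
end

section
/- Let μ ≠ 0 and α, β, ρ ∈ ℝ with ρ² = β² - 4α, ρ > 0. If y : ℝ → ℝ is twice differentiable, y > 0, and solves y'' + (y')²/y + (μ + β/y³) y' - μ² y + βμ/y² - α/y⁵ = 0, then I(z) = (2 e^{-μz} y (y' + μ y) - (β+ρ) e^{-μz}/y)^{ρ+β} · (2 e^{-μz} y (y' + μ y) - (β-ρ) e^{-μz}/y)^{ρ-β} is constant on any interval where both base expressions are positive. -/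
/-!
The Sundman transformation `F = e^{-μz}/y`, `G = 1/y³` linearizes the equation. Concretely, for
each root `c = β ± ρ` of `c² - 2βc + 4α = 0`, the quantity
`u_c = 2 e^{-μz} y (y' + μ y) - c e^{-μz}/y` satisfies `u_c' = (c - 2β)/(2y³) · u_c`, so
`log I = (ρ + β) log u_{β+ρ} + (ρ - β) log u_{β-ρ}` has derivative
`((ρ + β)(ρ - β) - (ρ - β)(ρ + β))/(2y³) = 0`.
-/

open Real Set

noncomputable def integralFactor (μ c : ℝ) (y y' : ℝ → ℝ) (z : ℝ) : ℝ :=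
  2 * exp (-(μ * z)) * y z * (y' z + μ * y z) - c * exp (-(μ * z)) / y z

theorem hasDerivAt_integralFactor {α β μ c y'' z : ℝ} {y y' : ℝ → ℝ}
    (hy : HasDerivAt y (y' z) z) (hy' : HasDerivAt y' y'' z) (hyz : y z ≠ 0)
    (hode : y'' + y' z ^ 2 / y z + (μ + β / y z ^ 3) * y' z - μ ^ 2 * y z
      + β * μ / y z ^ 2 - α / y z ^ 5 = 0)
    (hc : c ^ 2 - 2 * β * c + 4 * α = 0) :
    HasDerivAt (integralFactor μ c y y')
      ((c - 2 * β) / (2 * y z ^ 3) * integralFactor μ c y y' z) z := by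
  have hexp : HasDerivAt (fun t : ℝ => exp (-(μ * t))) (-μ * exp (-(μ * z))) z := by
    simpa [mul_comm] using ((hasDerivAt_id z).const_mul μ).neg.exp
  have h := (((hexp.const_mul 2).mul hy).mul (hy'.add (hy.const_mul μ))).sub
    ((hexp.const_mul c).div hy hyz)
  obtain rfl : y'' = -y' z ^ 2 / y z - (μ + β / y z ^ 3) * y' z + μ ^ 2 * y z
      - β * μ / y z ^ 2 + α / y z ^ 5 := by linear_combination hode
  obtain rfl : α = (2 * β * c - c ^ 2) / 4 := by linear_combination hc / 4
  refine h.congr_deriv ?_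
  simp only [integralFactor, Pi.add_apply, Pi.mul_apply]
  field_simp
  ring

theorem HasDerivAt.rpow_mul_rpow_of_proportional {f g : ℝ → ℝ} {a b p q x : ℝ}
    (hf : HasDerivAt f (a * f x) x) (hg : HasDerivAt g (b * g x) x)
    (hfx : f x ≠ 0) (hgx : g x ≠ 0) :
    HasDerivAt (fun t => f t ^ p * g t ^ q) ((p * a + q * b) * (f x ^ p * g x ^ q)) x := by
  refine ((hf.rpow_const (p := p) (Or.inl hfx)).mul
    (hg.rpow_const (p := q) (Or.inl hgx))).congr_deriv ?_
  rw [rpow_sub_one hfx, rpow_sub_one hgx]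
  field_simp

theorem stmt_15_general (α β ρ μ : ℝ) (hρ : ρ ^ 2 = β ^ 2 - 4 * α)
    (y : ℝ → ℝ) (hy : Differentiable ℝ y) (hy' : Differentiable ℝ (deriv y))
    (hypos : ∀ z : ℝ, 0 < y z)
    (heq : ∀ z : ℝ,
      deriv (deriv y) z + (deriv y z) ^ 2 / y z + (μ + β / y z ^ 3) * deriv y z
        - μ ^ 2 * y z + β * μ / y z ^ 2 - α / y z ^ 5 = 0)
    (a b : ℝ)
    (hpos : ∀ z ∈ Set.Ioo a b,
      0 < 2 * Real.exp (-(μ * z)) * y z * (deriv y z + μ * y z)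
            - (β + ρ) * Real.exp (-(μ * z)) / y z ∧
      0 < 2 * Real.exp (-(μ * z)) * y z * (deriv y z + μ * y z)
            - (β - ρ) * Real.exp (-(μ * z)) / y z) :
    ∀ x ∈ Set.Ioo a b, ∀ x' ∈ Set.Ioo a b,
      (2 * Real.exp (-(μ * x)) * y x * (deriv y x + μ * y x)
          - (β + ρ) * Real.exp (-(μ * x)) / y x) ^ (ρ + β) *
        (2 * Real.exp (-(μ * x)) * y x * (deriv y x + μ * y x)
          - (β - ρ) * Real.exp (-(μ * x)) / y x) ^ (ρ - β)
      = (2 * Real.exp (-(μ * x')) * y x' * (deriv y x' + μ * y x')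
          - (β + ρ) * Real.exp (-(μ * x')) / y x') ^ (ρ + β) *
        (2 * Real.exp (-(μ * x')) * y x' * (deriv y x' + μ * y x')
          - (β - ρ) * Real.exp (-(μ * x')) / y x') ^ (ρ - β) := by
  have hfactor : ∀ z, ∀ c, c ^ 2 - 2 * β * c + 4 * α = 0 →
      HasDerivAt (integralFactor μ c y (deriv y))
        ((c - 2 * β) / (2 * y z ^ 3) * integralFactor μ c y (deriv y) z) z :=
    fun z c hc => hasDerivAt_integralFactor (hy z).hasDerivAt (hy' z).hasDerivAt
      (hypos z).ne' (heq z) hc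
  have hI : ∀ z ∈ Ioo a b, HasDerivAt
      (fun t => integralFactor μ (β + ρ) y (deriv y) t ^ (ρ + β)
        * integralFactor μ (β - ρ) y (deriv y) t ^ (ρ - β)) 0 z := by
    intro z hz
    have h := (hfactor z (β + ρ) (by linear_combination hρ)).rpow_mul_rpow_of_proportional
      (p := ρ + β) (q := ρ - β)
      (hfactor z (β - ρ) (by linear_combination hρ)) (hpos z hz).1.ne' (hpos z hz).2.ne'
    rwa [show (ρ + β) * ((β + ρ - 2 * β) / (2 * y z ^ 3))
        + (ρ - β) * ((β - ρ - 2 * β) / (2 * y z ^ 3)) = 0 by ring, zero_mul] at h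
  intro x hx x' hx'
  exact isOpen_Ioo.is_const_of_deriv_eq_zero isPreconnected_Ioo
    (fun z hz => (hI z hz).differentiableAt.differentiableWithinAt) (fun z hz => (hI z hz).deriv)
    hx hx'

theorem stmt_15 (α β ρ μ : ℝ) (hμ : μ ≠ 0) (hρ : ρ ^ 2 = β ^ 2 - 4 * α) (hρpos : 0 < ρ)
    (y : ℝ → ℝ) (hy : Differentiable ℝ y) (hy' : Differentiable ℝ (deriv y))
    (hypos : ∀ z : ℝ, 0 < y z)
    (heq : ∀ z : ℝ,
      deriv (deriv y) z + (deriv y z) ^ 2 / y z + (μ + β / y z ^ 3) * deriv y z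
        - μ ^ 2 * y z + β * μ / y z ^ 2 - α / y z ^ 5 = 0)
    (a b : ℝ)
    (hpos : ∀ z ∈ Set.Ioo a b,
      0 < 2 * Real.exp (-(μ * z)) * y z * (deriv y z + μ * y z)
            - (β + ρ) * Real.exp (-(μ * z)) / y z ∧
      0 < 2 * Real.exp (-(μ * z)) * y z * (deriv y z + μ * y z)
            - (β - ρ) * Real.exp (-(μ * z)) / y z) :
    ∀ x ∈ Set.Ioo a b, ∀ x' ∈ Set.Ioo a b,
      (2 * Real.exp (-(μ * x)) * y x * (deriv y x + μ * y x)
          - (β + ρ) * Real.exp (-(μ * x)) / y x) ^ (ρ + β) *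
        (2 * Real.exp (-(μ * x)) * y x * (deriv y x + μ * y x)
          - (β - ρ) * Real.exp (-(μ * x)) / y x) ^ (ρ - β)
      = (2 * Real.exp (-(μ * x')) * y x' * (deriv y x' + μ * y x')
          - (β + ρ) * Real.exp (-(μ * x')) / y x') ^ (ρ + β) *
        (2 * Real.exp (-(μ * x')) * y x' * (deriv y x' + μ * y x')
          - (β - ρ) * Real.exp (-(μ * x')) / y x') ^ (ρ - β) :=
  stmt_15_general α β ρ μ hρ y hy hy' hypos heq a b hpos
end

section
/- Let μ ≠ 0, β ∈ ℝ, and set α = β²/4 (so ρ = 0). If y > 0 is twice differentiable and solves y'' + (y')²/y + (μ + β/y³) y' - μ² y + βμ/y² - (β²/4)/y⁵ = 0, then I(z) = e^{-μz} (2y(y' + μy) - β/y) · exp( β / (β - 2μ y³ - 2 y² y') ) is constant on any interval where β - 2μy³ - 2y²y' ≠ 0. -/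
/-!
Write `G = β - 2μy³ - 2y²y'`. The first factor of the integral is `2y(y' + μy) - β/y = -G/y`, and
the ODE (with `α = β²/4`) turns into the Riccati-type law `G' = -G²/(2y³)`. Hence
`log |e^{-μz} (G/y) e^{β/G}|` has derivative `-μ - y'/y + (β - G)/(2y³)`, which vanishes because
`β - G = 2y²(y' + μy)`.
-/

open Real

section FirstIntegral

variable {y G : ℝ → ℝ} {β μ z q : ℝ}

theorem hasDerivAt_riccati_of_ode (hy : HasDerivAt y (deriv y z) z)
    (hy' : HasDerivAt (deriv y) (deriv (deriv y) z) z) (hyz : y z ≠ 0)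
    (hode : deriv (deriv y) z + (deriv y z) ^ 2 / y z + (μ + β / y z ^ 3) * deriv y z
        - μ ^ 2 * y z + β * μ / y z ^ 2 - (β ^ 2 / 4) / y z ^ 5 = 0) :
    HasDerivAt (fun w => β - 2 * μ * y w ^ 3 - 2 * y w ^ 2 * deriv y w)
      (-(β - 2 * μ * y z ^ 3 - 2 * y z ^ 2 * deriv y z) ^ 2 / (2 * y z ^ 3)) z := by
  have hD := ((hasDerivAt_const z β).sub ((hy.pow 3).const_mul (2 * μ))).sub
    (((hy.pow 2).const_mul 2).mul hy')
  refine hD.congr_deriv ?_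
  simp only [Pi.pow_apply, Nat.cast_ofNat, Nat.add_one_sub_one]
  field_simp at hode
  field_simp
  linear_combination (-1) * hode

theorem hasDerivAt_exp_mul_div_mul_exp_of_riccati (hy : HasDerivAt y q z)
    (hG : HasDerivAt G (-G z ^ 2 / (2 * y z ^ 3)) z) (hyz : y z ≠ 0) (hGz : G z ≠ 0)
    (hGq : G z = β - 2 * y z ^ 2 * (q + μ * y z)) :
    HasDerivAt (fun w => exp (-(μ * w)) * (G w / y w) * exp (β / G w)) 0 z := by
  have hE : HasDerivAt (fun w => exp (-(μ * w))) (exp (-(μ * z)) * -μ) z := by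
    simpa using ((hasDerivAt_id z).const_mul μ).neg.exp
  have hD := (hE.mul (hG.div hy hyz)).mul (((hasDerivAt_const z β).div hG hGz).exp)
  refine hD.congr_deriv ?_
  have hq : q = (β - G z) / (2 * y z ^ 2) - μ * y z := by
    field_simp
    linear_combination hGq
  simp only [Pi.mul_apply, Pi.div_apply, hq]
  field_simp
  ring

end FirstIntegral

theorem stmt_16_general (β μ : ℝ)
    (y : ℝ → ℝ) (hy : Differentiable ℝ y) (hy' : Differentiable ℝ (deriv y))
    (hypos : ∀ z : ℝ, 0 < y z)
    (heq : ∀ z : ℝ,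
      deriv (deriv y) z + (deriv y z) ^ 2 / y z + (μ + β / y z ^ 3) * deriv y z
        - μ ^ 2 * y z + β * μ / y z ^ 2 - (β ^ 2 / 4) / y z ^ 5 = 0)
    (a b : ℝ)
    (hne : ∀ z ∈ Set.Ioo a b, β - 2 * μ * y z ^ 3 - 2 * y z ^ 2 * deriv y z ≠ 0) :
    ∀ x ∈ Set.Ioo a b, ∀ x' ∈ Set.Ioo a b,
      Real.exp (-(μ * x)) * (2 * y x * (deriv y x + μ * y x) - β / y x) *
        Real.exp (β / (β - 2 * μ * y x ^ 3 - 2 * y x ^ 2 * deriv y x))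
      = Real.exp (-(μ * x')) * (2 * y x' * (deriv y x' + μ * y x') - β / y x') *
        Real.exp (β / (β - 2 * μ * y x' ^ 3 - 2 * y x' ^ 2 * deriv y x')) := by
  set G := fun w => β - 2 * μ * y w ^ 3 - 2 * y w ^ 2 * deriv y w
  set I := fun w => exp (-(μ * w)) * (G w / y w) * exp (β / G w)
  have hfirst : ∀ w, 2 * y w * (deriv y w + μ * y w) - β / y w = -(G w / y w) := by
    intro w
    field_simp [(hypos w).ne']
    ring
  have hI : ∀ z ∈ Set.Ioo a b, HasDerivAt I 0 z := fun z hz =>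
    hasDerivAt_exp_mul_div_mul_exp_of_riccati (hy z).hasDerivAt
      (hasDerivAt_riccati_of_ode (hy z).hasDerivAt (hy' z).hasDerivAt (hypos z).ne' (heq z))
      (hypos z).ne' (hne z hz) (by ring)
  intro x hx x' hx'
  simp only [hfirst, neg_mul, mul_neg]
  congr 1
  exact isOpen_Ioo.is_const_of_deriv_eq_zero isPreconnected_Ioo
    (fun z hz => (hI z hz).differentiableAt.differentiableWithinAt)
    (fun z hz => (hI z hz).deriv) hx hx'

theorem stmt_16 (β μ : ℝ) (hμ : μ ≠ 0)
    (y : ℝ → ℝ) (hy : Differentiable ℝ y) (hy' : Differentiable ℝ (deriv y))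
    (hypos : ∀ z : ℝ, 0 < y z)
    (heq : ∀ z : ℝ,
      deriv (deriv y) z + (deriv y z) ^ 2 / y z + (μ + β / y z ^ 3) * deriv y z
        - μ ^ 2 * y z + β * μ / y z ^ 2 - (β ^ 2 / 4) / y z ^ 5 = 0)
    (a b : ℝ)
    (hne : ∀ z ∈ Set.Ioo a b, β - 2 * μ * y z ^ 3 - 2 * y z ^ 2 * deriv y z ≠ 0) :
    ∀ x ∈ Set.Ioo a b, ∀ x' ∈ Set.Ioo a b,
      Real.exp (-(μ * x)) * (2 * y x * (deriv y x + μ * y x) - β / y x) *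
        Real.exp (β / (β - 2 * μ * y x ^ 3 - 2 * y x ^ 2 * deriv y x))
      = Real.exp (-(μ * x')) * (2 * y x' * (deriv y x' + μ * y x') - β / y x') *
        Real.exp (β / (β - 2 * μ * y x' ^ 3 - 2 * y x' ^ 2 * deriv y x')) :=
  stmt_16_general β μ y hy hy' hypos heq a b hne
end

section
/- Let s : ℝ → ℝ be nowhere-zero and twice differentiable, μ ∈ ℝ, and α ≠ 0, β, ρ ∈ ℝ with ρ² = β² - 4α, ρ > 0. If y solves y'' + (3β s y² + 5 s'/(3s)) y' + 3α s² y⁵ + 2β s' y³ + 3μ y² + (2 s''/(3s)) y = 0, then I(z) = (6α s y' + 4α y s' + 3(β+ρ)(α s² y³ + μ))^{ρ+β} · (6α s y' + 4α y s' + 3(β-ρ)(α s² y³ + μ))^{ρ-β} is constant on any interval where both base expressions are positive. -/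
/-!
Write `F_c = 6αs y' + 4α y s' + 3c(αs²y³ + μ)`. When `c` is a root of `c² - 2βc + 4α`, i.e.
`c = β ± ρ`, the equation makes `F_c` satisfy the linear equation `F_c' = (3/2)(c - 2β) s y² F_c`.
The logarithmic derivatives of `F_{β+ρ}` and `F_{β-ρ}` are therefore `(3/2)(ρ - β) s y²` and
`-(3/2)(ρ + β) s y²`, and the weights `ρ + β`, `ρ - β` make their combination vanish, so
`(ρ + β) log F_{β+ρ} + (ρ - β) log F_{β-ρ}` is constant.
-/

open Real

theorem rpow_mul_rpow_eq_of_hasDerivAt {S : Set ℝ} (hS : IsOpen S) (hS' : IsPreconnected S)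
    {f g u v : ℝ → ℝ} {p q : ℝ}
    (hf : ∀ z ∈ S, HasDerivAt f (u z * f z) z) (hg : ∀ z ∈ S, HasDerivAt g (v z * g z) z)
    (hf0 : ∀ z ∈ S, 0 < f z) (hg0 : ∀ z ∈ S, 0 < g z)
    (huv : ∀ z ∈ S, p * u z + q * v z = 0) {x x' : ℝ} (hx : x ∈ S) (hx' : x' ∈ S) :
    f x ^ p * g x ^ q = f x' ^ p * g x' ^ q := by
  have hlog : ∀ z ∈ S, HasDerivAt (fun z => p * log (f z) + q * log (g z)) 0 z := by
    intro z hz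
    refine ((((hf z hz).log (hf0 z hz).ne').const_mul p).add
      (((hg z hz).log (hg0 z hz).ne').const_mul q)).congr_deriv ?_
    rw [mul_div_cancel_right₀ _ (hf0 z hz).ne', mul_div_cancel_right₀ _ (hg0 z hz).ne', huv z hz]
  have hconst := hS.is_const_of_deriv_eq_zero hS'
    (fun z hz => (hlog z hz).differentiableAt.differentiableWithinAt)
    (fun z hz => (hlog z hz).deriv) hx hx'
  simp only [rpow_def_of_pos (hf0 x hx), rpow_def_of_pos (hg0 x hx),
    rpow_def_of_pos (hf0 x' hx'), rpow_def_of_pos (hg0 x' hx'), ← exp_add]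
  congr 1
  linear_combination hconst

noncomputable def firstIntegralFactor (α μ c : ℝ) (s y : ℝ → ℝ) (z : ℝ) : ℝ :=
  6 * α * s z * deriv y z + 4 * α * y z * deriv s z + 3 * c * (α * s z ^ 2 * y z ^ 3 + μ)

theorem hasDerivAt_firstIntegralFactor (α μ c : ℝ) {s y : ℝ → ℝ} {z : ℝ}
    (hs : DifferentiableAt ℝ s z) (hs' : DifferentiableAt ℝ (deriv s) z)
    (hy : DifferentiableAt ℝ y z) (hy' : DifferentiableAt ℝ (deriv y) z) :
    HasDerivAt (firstIntegralFactor α μ c s y)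
      (6 * α * (deriv s z * deriv y z + s z * deriv (deriv y) z)
        + 4 * α * (deriv y z * deriv s z + y z * deriv (deriv s) z)
        + 3 * c * α * (2 * s z * deriv s z * y z ^ 3 + s z ^ 2 * (3 * y z ^ 2 * deriv y z))) z := by
  have hsq : HasDerivAt (fun z => s z ^ 2) (2 * s z * deriv s z) z := by
    simpa using hs.hasDerivAt.fun_pow 2
  have hcube : HasDerivAt (fun z => y z ^ 3) (3 * y z ^ 2 * deriv y z) z := by
    simpa using hy.hasDerivAt.fun_pow 3
  refine ((((hs.hasDerivAt.const_mul (6 * α)).mul hy'.hasDerivAt).add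
    ((hy.hasDerivAt.const_mul (4 * α)).mul hs'.hasDerivAt)).add
    ((((hsq.const_mul α).mul hcube).add_const μ).const_mul (3 * c))).congr_deriv ?_
  ring

theorem hasDerivAt_firstIntegralFactor_of_ode {α β μ c : ℝ} {s y : ℝ → ℝ} {z : ℝ}
    (hs : DifferentiableAt ℝ s z) (hs' : DifferentiableAt ℝ (deriv s) z)
    (hy : DifferentiableAt ℝ y z) (hy' : DifferentiableAt ℝ (deriv y) z) (hsz : s z ≠ 0)
    (hc : c ^ 2 - 2 * β * c + 4 * α = 0)
    (hode : deriv (deriv y) z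
        + (3 * β * s z * y z ^ 2 + 5 * deriv s z / (3 * s z)) * deriv y z
        + 3 * α * s z ^ 2 * y z ^ 5 + 2 * β * deriv s z * y z ^ 3 + 3 * μ * y z ^ 2
        + (2 * deriv (deriv s) z / (3 * s z)) * y z = 0) :
    HasDerivAt (firstIntegralFactor α μ c s y)
      (3 / 2 * (c - 2 * β) * s z * y z ^ 2 * firstIntegralFactor α μ c s y z) z := by
  convert hasDerivAt_firstIntegralFactor α μ c hs hs' hy hy' using 1
  field_simp at hode
  unfold firstIntegralFactor
  linear_combination (-2 * α) * hode
    + (9 / 2 * (α * s z ^ 3 * y z ^ 5 + μ * s z * y z ^ 2)) * hc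

theorem stmt_17_general (α β ρ μ : ℝ) (hρ : ρ ^ 2 = β ^ 2 - 4 * α)
    (s : ℝ → ℝ) (hs : Differentiable ℝ s) (hs' : Differentiable ℝ (deriv s))
    (hsne : ∀ z : ℝ, s z ≠ 0)
    (y : ℝ → ℝ) (hy : Differentiable ℝ y) (hy' : Differentiable ℝ (deriv y))
    (heq : ∀ z : ℝ,
      deriv (deriv y) z
        + (3 * β * s z * y z ^ 2 + 5 * deriv s z / (3 * s z)) * deriv y z
        + 3 * α * s z ^ 2 * y z ^ 5 + 2 * β * deriv s z * y z ^ 3 + 3 * μ * y z ^ 2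
        + (2 * deriv (deriv s) z / (3 * s z)) * y z = 0)
    (a b : ℝ)
    (hpos : ∀ z ∈ Set.Ioo a b,
      0 < 6 * α * s z * deriv y z + 4 * α * y z * deriv s z
            + 3 * (β + ρ) * (α * s z ^ 2 * y z ^ 3 + μ) ∧
      0 < 6 * α * s z * deriv y z + 4 * α * y z * deriv s z
            + 3 * (β - ρ) * (α * s z ^ 2 * y z ^ 3 + μ)) :
    ∀ x ∈ Set.Ioo a b, ∀ x' ∈ Set.Ioo a b,
      (6 * α * s x * deriv y x + 4 * α * y x * deriv s x
          + 3 * (β + ρ) * (α * s x ^ 2 * y x ^ 3 + μ)) ^ (ρ + β) *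
        (6 * α * s x * deriv y x + 4 * α * y x * deriv s x
          + 3 * (β - ρ) * (α * s x ^ 2 * y x ^ 3 + μ)) ^ (ρ - β)
      = (6 * α * s x' * deriv y x' + 4 * α * y x' * deriv s x'
          + 3 * (β + ρ) * (α * s x' ^ 2 * y x' ^ 3 + μ)) ^ (ρ + β) *
        (6 * α * s x' * deriv y x' + 4 * α * y x' * deriv s x'
          + 3 * (β - ρ) * (α * s x' ^ 2 * y x' ^ 3 + μ)) ^ (ρ - β) := by
  intro x hx x' hx'
  have hderiv {c : ℝ} (hc : c ^ 2 - 2 * β * c + 4 * α = 0) (z : ℝ) :=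
    hasDerivAt_firstIntegralFactor_of_ode (μ := μ) (hs z) (hs' z) (hy z) (hy' z) (hsne z) hc (heq z)
  exact rpow_mul_rpow_eq_of_hasDerivAt isOpen_Ioo isPreconnected_Ioo
    (fun z _ => hderiv (c := β + ρ) (by linear_combination hρ) z)
    (fun z _ => hderiv (c := β - ρ) (by linear_combination hρ) z)
    (fun z hz => (hpos z hz).1) (fun z hz => (hpos z hz).2) (fun z _ => by ring) hx hx'

theorem stmt_17 (α β ρ μ : ℝ) (hα : α ≠ 0) (hρ : ρ ^ 2 = β ^ 2 - 4 * α) (hρpos : 0 < ρ)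
    (s : ℝ → ℝ) (hs : Differentiable ℝ s) (hs' : Differentiable ℝ (deriv s))
    (hsne : ∀ z : ℝ, s z ≠ 0)
    (y : ℝ → ℝ) (hy : Differentiable ℝ y) (hy' : Differentiable ℝ (deriv y))
    (heq : ∀ z : ℝ,
      deriv (deriv y) z
        + (3 * β * s z * y z ^ 2 + 5 * deriv s z / (3 * s z)) * deriv y z
        + 3 * α * s z ^ 2 * y z ^ 5 + 2 * β * deriv s z * y z ^ 3 + 3 * μ * y z ^ 2
        + (2 * deriv (deriv s) z / (3 * s z)) * y z = 0)
    (a b : ℝ)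
    (hpos : ∀ z ∈ Set.Ioo a b,
      0 < 6 * α * s z * deriv y z + 4 * α * y z * deriv s z
            + 3 * (β + ρ) * (α * s z ^ 2 * y z ^ 3 + μ) ∧
      0 < 6 * α * s z * deriv y z + 4 * α * y z * deriv s z
            + 3 * (β - ρ) * (α * s z ^ 2 * y z ^ 3 + μ)) :
    ∀ x ∈ Set.Ioo a b, ∀ x' ∈ Set.Ioo a b,
      (6 * α * s x * deriv y x + 4 * α * y x * deriv s x
          + 3 * (β + ρ) * (α * s x ^ 2 * y x ^ 3 + μ)) ^ (ρ + β) *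
        (6 * α * s x * deriv y x + 4 * α * y x * deriv s x
          + 3 * (β - ρ) * (α * s x ^ 2 * y x ^ 3 + μ)) ^ (ρ - β)
      = (6 * α * s x' * deriv y x' + 4 * α * y x' * deriv s x'
          + 3 * (β + ρ) * (α * s x' ^ 2 * y x' ^ 3 + μ)) ^ (ρ + β) *
        (6 * α * s x' * deriv y x' + 4 * α * y x' * deriv s x'
          + 3 * (β - ρ) * (α * s x' ^ 2 * y x' ^ 3 + μ)) ^ (ρ - β) :=
  stmt_17_general α β ρ μ hρ s hs hs' hsne y hy hy' heq a b hpos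
end

section
/- Let n, k be nonzero integers, r = n/k, and set 4α = (1 - r²)β² (rational-resonance condition; note ρ = rβ when β > 0). Then for any solution w of w'' + β w' + α w = 0, the function J(ζ) = (2w' + (1+r)β w)^{n+k} · (2w' + (1-r)β w)^{n-k} is constant (here powers are integer powers, so J is a rational function of w and w', and no positivity assumptions are needed). -/
/-! The combinations `u = 2w' + (1 + r)βw` and `v = 2w' + (1 - r)βw` correspond to the two roots
of the characteristic polynomial, so each solves a first-order linear equation:
`u' = (r - 1)β/2 · u` and `v' = -(1 + r)β/2 · v`. Hence `log |u^(n+k) v^(n-k)|` has derivative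
`β/2 · ((n + k)(r - 1) - (n - k)(1 + r)) = β (r k - n) = 0`. -/

section LogarithmicDerivative

variable {𝕜 : Type*} [NontriviallyNormedField 𝕜] {u v : 𝕜 → 𝕜} {c d x : 𝕜}

theorem HasDerivAt.zpow_of_eq_mul (m : ℤ) (hu : HasDerivAt u (c * u x) x) (hx : u x ≠ 0) :
    HasDerivAt (fun t => u t ^ m) (m * c * u x ^ m) x := by
  refine ((hasDerivAt_zpow m (u x) (Or.inl hx)).comp x hu).congr_deriv ?_
  rw [show (m : 𝕜) * u x ^ (m - 1) * (c * u x) = m * c * (u x ^ (m - 1) * u x) by ring,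
    ← zpow_add_one₀ hx, sub_add_cancel]

theorem HasDerivAt.zpow_mul_zpow_of_eq_mul (m p : ℤ) (hu : HasDerivAt u (c * u x) x)
    (hv : HasDerivAt v (d * v x) x) (hux : u x ≠ 0) (hvx : v x ≠ 0) :
    HasDerivAt (fun t => u t ^ m * v t ^ p) ((m * c + p * d) * (u x ^ m * v x ^ p)) x :=
  ((hu.zpow_of_eq_mul m hux).mul (hv.zpow_of_eq_mul p hvx)).congr_deriv (by ring)

end LogarithmicDerivative

/-- `hμ` says that `-μ / 2` is a root of the characteristic polynomial `X² + βX + α`. -/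
theorem hasDerivAt_two_mul_deriv_add_mul_of_ode {α β μ : ℝ} {w : ℝ → ℝ} {x : ℝ}
    (hw : DifferentiableAt ℝ w x) (hw' : DifferentiableAt ℝ (deriv w) x)
    (heq : deriv (deriv w) x + β * deriv w x + α * w x = 0)
    (hμ : μ ^ 2 - 2 * β * μ + 4 * α = 0) :
    HasDerivAt (fun t => 2 * deriv w t + μ * w t)
      ((μ / 2 - β) * (2 * deriv w x + μ * w x)) x := by
  refine ((hw'.hasDerivAt.const_mul 2).add (hw.hasDerivAt.const_mul μ)).congr_deriv ?_
  linear_combination 2 * heq - (w x / 2) * hμ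

theorem stmt_19_general (α β : ℝ) (n k : ℤ) (hk : k ≠ 0)
    (r : ℝ) (hr : r = (n : ℝ) / (k : ℝ)) (hα : 4 * α = (1 - r ^ 2) * β ^ 2)
    (w : ℝ → ℝ) (hw : Differentiable ℝ w) (hw' : Differentiable ℝ (deriv w))
    (heq : ∀ ζ : ℝ, deriv (deriv w) ζ + β * deriv w ζ + α * w ζ = 0)
    (a b : ℝ)
    (hne : ∀ ζ ∈ Set.Ioo a b,
      2 * deriv w ζ + (1 + r) * β * w ζ ≠ 0 ∧ 2 * deriv w ζ + (1 - r) * β * w ζ ≠ 0) :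
    ∀ x ∈ Set.Ioo a b, ∀ x' ∈ Set.Ioo a b,
      (2 * deriv w x + (1 + r) * β * w x) ^ (n + k) *
        (2 * deriv w x + (1 - r) * β * w x) ^ (n - k)
      = (2 * deriv w x' + (1 + r) * β * w x') ^ (n + k) *
        (2 * deriv w x' + (1 - r) * β * w x') ^ (n - k) := by
  have hrk : r * k = n := by rw [hr]; field_simp
  have hJ : ∀ ζ ∈ Set.Ioo a b, HasDerivAt (fun t =>
      (2 * deriv w t + (1 + r) * β * w t) ^ (n + k) *
        (2 * deriv w t + (1 - r) * β * w t) ^ (n - k)) 0 ζ := by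
    intro ζ hζ
    have hu := hasDerivAt_two_mul_deriv_add_mul_of_ode (μ := (1 + r) * β)
      (hw ζ) (hw' ζ) (heq ζ) (by linear_combination hα)
    have hv := hasDerivAt_two_mul_deriv_add_mul_of_ode (μ := (1 - r) * β)
      (hw ζ) (hw' ζ) (heq ζ) (by linear_combination hα)
    refine (hu.zpow_mul_zpow_of_eq_mul (n + k) (n - k) hv (hne ζ hζ).1 (hne ζ hζ).2).congr_deriv
      ?_
    push_cast
    linear_combination (β * (2 * deriv w ζ + (1 + r) * β * w ζ) ^ (n + k) *
      (2 * deriv w ζ + (1 - r) * β * w ζ) ^ (n - k)) * hrk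
  intro x hx x' hx'
  exact isOpen_Ioo.is_const_of_deriv_eq_zero isPreconnected_Ioo
    (fun ζ hζ => (hJ ζ hζ).differentiableAt.differentiableWithinAt)
    (fun ζ hζ => (hJ ζ hζ).deriv) hx hx'

theorem stmt_19 (α β : ℝ) (hβ : 0 < β) (n k : ℤ) (hn : n ≠ 0) (hk : k ≠ 0)
    (r : ℝ) (hr : r = (n : ℝ) / (k : ℝ)) (hα : 4 * α = (1 - r ^ 2) * β ^ 2)
    (w : ℝ → ℝ) (hw : Differentiable ℝ w) (hw' : Differentiable ℝ (deriv w))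
    (heq : ∀ ζ : ℝ, deriv (deriv w) ζ + β * deriv w ζ + α * w ζ = 0)
    (a b : ℝ)
    (hne : ∀ ζ ∈ Set.Ioo a b,
      2 * deriv w ζ + (1 + r) * β * w ζ ≠ 0 ∧ 2 * deriv w ζ + (1 - r) * β * w ζ ≠ 0) :
    ∀ x ∈ Set.Ioo a b, ∀ x' ∈ Set.Ioo a b,
      (2 * deriv w x + (1 + r) * β * w x) ^ (n + k) *
        (2 * deriv w x + (1 - r) * β * w x) ^ (n - k)
      = (2 * deriv w x' + (1 + r) * β * w x') ^ (n + k) *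
        (2 * deriv w x' + (1 - r) * β * w x') ^ (n - k) :=
  stmt_19_general α β n k hk r hr hα w hw hw' heq a b hne
end
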